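/- arXiv:2312.13920 — 2 statements merged into one kernel-verified Lean document; each statement's English description precedes it below -/
import Mathlib

section
/- Let 1 ≤ p < ∞, let w be a weight sequence with ∑_{n=1}^∞ 1/|w₁⋯w_n|^p < ∞, and let B_w be the associated weighted backward shift on X = ℓ_p(ℤ₊). Let m = ⊗_{n≥0} μ_n be a B_w-invariant product measure on ℓ_p (i.e. a B_w-invariant product probability measure on 𝕂^{ℤ₊} giving full measure to ℓ_p, restricted to ℓ_p). If the measure μ₀ has full support in 𝕂, then m is an ergodic measure with full support for B_w: m(U) > 0 for every non-empty open set U ⊆ X, and every Borel set A ⊆ X with B_w⁻¹(A) = A satisfies m(A) ∈ {0, 1}. -/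
/-!
The coordinate map `ι : ℓ_p → 𝕂^ℕ` is a continuous injection of a Polish space, hence a Borel
isomorphism onto its image, and the product hypothesis says that `ι` pushes `m` forward to the
product measure `⊗ μ_n`, under which the coordinates are independent. Since `ι` intertwines
`B_w` with the weighted shift `T` of `𝕂^ℕ`, invariance gives `μ_n = (w_{n+1} • ·)_* μ_{n+1}`, so
every `μ_n` has full support.

Full support: the ball of radius `ε` about `x` contains the intersection of the event that the
first `N` coordinates are close to those of `x` and the event that the `ℓ_p`-tail of `y - x`
beyond `N` is small. These events are independent; the first is open in `𝕂^ℕ`, hence has positive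
product measure, and the second has positive measure for some `N` because the tail events
exhaust `ℓ_p` as `N` grows.

Ergodicity: if `B_w⁻¹ A = A`, then `A = ι⁻¹ (limsup_k T⁻ᵏ (ι A))`. Since `T^k` only reads the
coordinates of index `≥ k`, the limsup is a tail event, and Kolmogorov's 0-1 law applies.
-/

open MeasureTheory Filter
open scoped ENNReal NNReal

noncomputable instance {𝕂 : Type*} [RCLike 𝕂] {p : ℝ≥0∞} [Fact (1 ≤ p)] :
    MeasurableSpace (lp (fun _ : ℕ => 𝕂) p) := borel _

instance {𝕂 : Type*} [RCLike 𝕂] {p : ℝ≥0∞} [Fact (1 ≤ p)] :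
    BorelSpace (lp (fun _ : ℕ => 𝕂) p) := ⟨rfl⟩

open ProbabilityTheory Set TopologicalSpace

namespace lp

section

variable {α : Type*} {E : α → Type*} [∀ i, NormedAddCommGroup (E i)] {p : ℝ≥0∞} [Fact (1 ≤ p)]

theorem separableSpace_of_ne_top [Countable α] [∀ i, NormedSpace ℝ (E i)]
    [∀ i, SeparableSpace (E i)] (hp : p ≠ ⊤) : SeparableSpace (lp E p) := by
  classical
  have hsingle : IsSeparable (⋃ i, range (lp.single p i : E i → lp E p)) :=
    .iUnion fun i => isSeparable_range (lp.singleContinuousLinearMap ℝ E p i).continuous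
  refine isSeparable_univ_iff.mp <| hsingle.span (R := ℝ).closure.mono fun f _ => ?_
  refine mem_closure_of_tendsto (lp.hasSum_single hp f) (.of_forall fun s => ?_)
  exact Submodule.sum_mem _ fun i _ => Submodule.subset_span (mem_iUnion_of_mem i ⟨f i, rfl⟩)

theorem measurableEmbedding_coe [Countable α] [∀ i, NormedSpace ℝ (E i)]
    [∀ i, SeparableSpace (E i)] [∀ i, CompleteSpace (E i)] [∀ i, MeasurableSpace (E i)]
    [∀ i, BorelSpace (E i)] [MeasurableSpace (lp E p)] [BorelSpace (lp E p)] (hp : p ≠ ⊤) :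
    MeasurableEmbedding (fun f : lp E p => (f : ∀ i, E i)) := by
  have := separableSpace_of_ne_top (E := E) hp
  exact lp.uniformContinuous_coe.continuous.measurableEmbedding Subtype.coe_injective

theorem edist_rpow_eq_tsum (hp : 0 < p.toReal) (f g : lp E p) :
    edist f g ^ p.toReal = ∑' i, edist (f i) (g i) ^ p.toReal := by
  rw [edist_dist, dist_eq_norm, ENNReal.ofReal_rpow_of_nonneg (norm_nonneg _) hp.le,
    norm_rpow_eq_tsum hp, ENNReal.ofReal_tsum_of_nonneg (fun i => by positivity)
      ((lp.memℓp _).summable hp)]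
  congr 1 with i
  rw [edist_dist, dist_eq_norm, ENNReal.ofReal_rpow_of_nonneg (norm_nonneg _) hp.le]
  rfl

end

variable {E : ℕ → Type*} [∀ n, NormedAddCommGroup (E n)] {p : ℝ≥0∞} [Fact (1 ≤ p)]

theorem exists_tsum_edist_nat_add_lt (hp : 0 < p.toReal) (x y : lp E p) {η : ℝ≥0∞} (hη : η ≠ 0) :
    ∃ N, ∑' n, edist (y (n + N)) (x (n + N)) ^ p.toReal < η := by
  have hfin : ∑' n, edist (y n) (x n) ^ p.toReal ≠ ⊤ := by
    rw [← edist_rpow_eq_tsum hp]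
    exact ENNReal.rpow_ne_top_of_nonneg hp.le (edist_ne_top _ _)
  exact ((ENNReal.tendsto_sum_nat_add _ hfin).eventually
    (eventually_lt_nhds (pos_iff_ne_zero.mpr hη))).exists

theorem edist_lt_of_sum_lt_of_tsum_nat_add_lt (hp : 0 < p.toReal) {x y : lp E p} {N : ℕ}
    {η ε : ℝ≥0∞} (hηε : η + η ≤ ε ^ p.toReal)
    (hhead : ∑ n ∈ Finset.range N, edist (y n) (x n) ^ p.toReal < η)
    (htail : ∑' n, edist (y (n + N)) (x (n + N)) ^ p.toReal < η) : edist y x < ε := by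
  rw [← ENNReal.rpow_lt_rpow_iff hp, edist_rpow_eq_tsum hp,
    ← Summable.sum_add_tsum_nat_add' (k := N) ENNReal.summable]
  exact (ENNReal.add_lt_add hhead htail).trans_le hηε

end lp

theorem measurable_eval_iSup {ι : Type*} {X : ι → Type*} [mX : ∀ i, MeasurableSpace (X i)]
    {J : Set ι} {i : ι} (hi : i ∈ J) :
    Measurable[⨆ j ∈ J, (mX j).comap (fun f : ∀ i, X i => f j)] (fun f : ∀ i, X i => f i) :=
  Measurable.of_comap_le <|
    le_iSup₂ (f := fun j (_ : j ∈ J) => (mX j).comap fun f : ∀ i, X i => f j) i hi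

theorem measurable_comp_iSup {ι κ X : Type*} [mX : MeasurableSpace X] {J : Set ι} {g : κ → ι}
    (hg : ∀ k, g k ∈ J) :
    Measurable[⨆ j ∈ J, mX.comap (fun t : ι → X => t j)] (fun (t : ι → X) k => t (g k)) :=
  @measurable_pi_lambda _ _ _ (⨆ j ∈ J, _) _ _ fun k => measurable_eval_iSup (hg k)

theorem MeasurableSet.limsup_of_iSup_ge {Ω : Type*} {s : ℕ → MeasurableSpace Ω} {u : ℕ → Set Ω}
    (hu : ∀ n, MeasurableSet[⨆ i ≥ n, s i] (u n)) :
    MeasurableSet[limsup s atTop] (limsup u atTop) := by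
  rw [show limsup s atTop = ⨅ n, ⨆ i ≥ n, s i from limsup_eq_iInf_iSup_of_nat,
    MeasurableSpace.measurableSet_iInf]
  intro k
  rw [← limsup_nat_add u k, limsup_eq_iInf_iSup_of_nat]
  refine .iInter fun N => .iUnion fun i => .iUnion fun _ => ?_
  have hle : (⨆ j ≥ i + k, s j) ≤ ⨆ j ≥ k, s j := iSup₂_mono' fun j hj => ⟨j, by omega, le_rfl⟩
  exact hle _ (hu (i + k))

namespace MeasureTheory.Measure

section infinitePi

variable {ι : Type*} {X : ι → Type*} [∀ i, MeasurableSpace (X i)] (μ : ∀ i, Measure (X i))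
  [∀ i, IsProbabilityMeasure (μ i)]

instance infinitePi.isOpenPosMeasure [∀ i, TopologicalSpace (X i)]
    [∀ i, OpensMeasurableSpace (X i)] [∀ i, (μ i).IsOpenPosMeasure] :
    (infinitePi μ).IsOpenPosMeasure := by
  refine ⟨fun U hU ⟨f, hf⟩ => ?_⟩
  obtain ⟨I, u, hu, hIU⟩ := isOpen_pi_iff.mp hU f hf
  refine (pos_mono hIU ?_).ne'
  rw [infinitePi_pi μ fun i hi => (hu i hi).1.measurableSet, CanonicallyOrderedAdd.prod_pos]
  exact fun i hi => (hu i hi).1.measure_pos (μ i) ⟨f i, (hu i hi).2⟩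

theorem iIndep_comap_eval_infinitePi :
    iIndep (fun i => MeasurableSpace.comap (fun f : ∀ i, X i => f i) inferInstance)
      (infinitePi μ) :=
  (iIndepFun_iff_iIndep _ _ _).mp (iIndepFun_infinitePi (X := fun _ => id) fun _ => measurable_id)

theorem infinitePi_inter_eq_mul_of_disjoint {I J : Set ι} (hIJ : Disjoint I J)
    {s t : Set (∀ i, X i)}
    (hs : MeasurableSet[⨆ i ∈ I, MeasurableSpace.comap (fun f : ∀ i, X i => f i) inferInstance] s)
    (ht : MeasurableSet[⨆ i ∈ J, MeasurableSpace.comap (fun f : ∀ i, X i => f i) inferInstance] t) :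
    infinitePi μ (s ∩ t) = infinitePi μ s * infinitePi μ t :=
  (Indep_iff _ _ _).mp (indep_iSup_of_disjoint (fun i => (measurable_pi_apply i).comap_le)
    (iIndep_comap_eval_infinitePi μ) hIJ) s t hs ht

end infinitePi

theorem map_eq_infinitePi_of_cylinder {Y R : Type*} [MeasurableSpace Y]
    [MeasurableSpace R] {m : Measure Y} {μ : ℕ → Measure R} [∀ n, IsProbabilityMeasure (μ n)]
    {ι : Y → ℕ → R} (hι : Measurable ι)
    (hprod : ∀ (N : ℕ) (A : ℕ → Set R), (∀ n, MeasurableSet (A n)) →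
      m {y | ∀ n ≤ N, ι y n ∈ A n} = ∏ n ∈ Finset.range (N + 1), μ n (A n)) :
    m.map ι = infinitePi μ := by
  classical
  refine eq_infinitePi μ fun s t ht => ?_
  have hs : ∀ n ∈ s, n < s.sup id + 1 := fun n hn => Nat.lt_succ_of_le (s.le_sup (f := id) hn)
  let A n := if n ∈ s then t n else univ
  have hA : ∀ n, MeasurableSet (A n) := fun n => by
    simp only [A]; split_ifs
    exacts [ht n, .univ]
  have hpre : ι ⁻¹' (s : Set ℕ).pi t = {y | ∀ n ≤ s.sup id, ι y n ∈ A n} := by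
    ext y
    simp only [mem_preimage, Set.mem_pi, Finset.mem_coe, mem_ofPred_eq, A]
    refine ⟨fun h n _ => ?_, fun h n hn => by
      simpa only [if_pos hn] using h n (Nat.le_of_lt_succ (hs n hn))⟩
    split_ifs with hn
    exacts [h n hn, mem_univ _]
  rw [map_apply hι (.pi s.countable_toSet fun i _ => ht i), hpre, hprod _ A hA,
    ← Finset.prod_subset (fun n hn => Finset.mem_range.mpr (hs n hn)) fun n _ hn => by
      simp [A, hn]]
  exact Finset.prod_congr rfl fun n hn => by simp [A, hn]

theorem isOpenPosMeasure_of_map_mul_left {K : Type*} [DivisionRing K]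
    [TopologicalSpace K] [ContinuousMul K] [MeasurableSpace K] [BorelSpace K] {ν : Measure K}
    {c : K} (hc : c ≠ 0) [(ν.map (c * ·)).IsOpenPosMeasure] : ν.IsOpenPosMeasure := by
  have hmul : ∀ a : K, Continuous (a * ·) := fun a => continuous_const_mul a
  have : ν = (ν.map (c * ·)).map (c⁻¹ * ·) := by
    rw [map_map (hmul _).measurable (hmul _).measurable]
    simp [Function.comp_def, inv_mul_cancel_left₀ hc]
  rw [this]
  exact (hmul _).isOpenPosMeasure_map fun a => ⟨c * a, inv_mul_cancel_left₀ hc a⟩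

theorem isOpenPosMeasure_of_eq_map_mul {K : Type*} [DivisionRing K]
    [TopologicalSpace K] [ContinuousMul K] [MeasurableSpace K] [BorelSpace K] {μ : ℕ → Measure K}
    {w : ℕ → K} (hw : ∀ n, w (n + 1) ≠ 0) (hμ : ∀ n, μ n = (μ (n + 1)).map (w (n + 1) * ·))
    [(μ 0).IsOpenPosMeasure] (n : ℕ) : (μ n).IsOpenPosMeasure := by
  induction n with
  | zero => infer_instance
  | succ n ih =>
    have : ((μ (n + 1)).map (w (n + 1) * ·)).IsOpenPosMeasure := hμ n ▸ ih
    exact isOpenPosMeasure_of_map_mul_left (hw n)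

end MeasureTheory.Measure

def weightedShift {R : Type*} [Mul R] (w : ℕ → R) (t : ℕ → R) : ℕ → R :=
  fun n => w (n + 1) * t (n + 1)

section weightedShift

variable {R : Type*} [CommMonoid R] (w : ℕ → R)

theorem weightedShift_iterate_apply (k : ℕ) (t : ℕ → R) (n : ℕ) :
    (weightedShift w)^[k] t n = (∏ i ∈ Finset.range k, w (n + i + 1)) * t (n + k) := by
  induction k generalizing t with
  | zero => simp
  | succ k ih =>
    rw [Function.iterate_succ_apply, ih, weightedShift, Finset.prod_range_succ, mul_assoc]
    rfl

variable [MeasurableSpace R] [MeasurableMul R]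

theorem measurable_weightedShift_iterate (k : ℕ) :
    Measurable[⨆ i ≥ k, MeasurableSpace.comap (fun t : ℕ → R => t i) inferInstance]
      ((weightedShift w)^[k]) := by
  refine @measurable_pi_lambda _ _ _ (⨆ i ≥ k, _) _ _ fun n => ?_
  simp_rw [weightedShift_iterate_apply]
  exact (measurable_eval_iSup (J := Ici k) (by simp)).const_mul _

theorem infinitePi_limsup_preimage_weightedShift_iterate_eq_zero_or_one (μ : ℕ → Measure R)
    [∀ n, IsProbabilityMeasure (μ n)] {S : Set (ℕ → R)} (hS : MeasurableSet S) :
    Measure.infinitePi μ (limsup (fun k => (weightedShift w)^[k] ⁻¹' S) atTop) = 0 ∨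
      Measure.infinitePi μ (limsup (fun k => (weightedShift w)^[k] ⁻¹' S) atTop) = 1 :=
  measure_zero_or_one_of_measurableSet_limsup_atTop (fun i => (measurable_pi_apply i).comap_le)
    (Measure.iIndep_comap_eval_infinitePi μ)
    (.limsup_of_iSup_ge fun k => measurable_weightedShift_iterate w k hS)

end weightedShift

theorem eq_map_mul_of_map_eq_infinitePi {Y R : Type*} [MeasurableSpace Y] [Mul R]
    [MeasurableSpace R] [MeasurableMul R] {m : Measure Y} {μ : ℕ → Measure R}
    [∀ n, IsProbabilityMeasure (μ n)] {ι : Y → ℕ → R} (hι : Measurable ι)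
    (hm : m.map ι = Measure.infinitePi μ) {B : Y → Y} (hB : Measurable B) (hinv : m.map B = m)
    {w : ℕ → R} (hιB : Function.Semiconj ι B (weightedShift w)) (n : ℕ) :
    μ n = (μ (n + 1)).map (w (n + 1) * ·) := by
  have hμ : ∀ k, μ k = m.map (fun y => ι y k) := fun k => by
    rw [← Measure.infinitePi_map_eval μ k, ← hm, Measure.map_map (measurable_pi_apply k) hι]
    rfl
  calc μ n = (m.map B).map (fun y => ι y n) := by rw [hinv, hμ]
    _ = m.map (fun y => w (n + 1) * ι y (n + 1)) := by
      rw [Measure.map_map hι.eval hB]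
      exact congrArg (Measure.map · m) (funext fun y => congrFun (hιB y) n)
    _ = (μ (n + 1)).map (w (n + 1) * ·) := by
      rw [hμ, Measure.map_map (measurable_const_mul _) hι.eval]
      rfl

theorem measure_eq_zero_or_one_of_preimage_eq {Y R : Type*} [MeasurableSpace Y] [CommMonoid R]
    [MeasurableSpace R] [MeasurableMul R] {m : Measure Y} {μ : ℕ → Measure R}
    [∀ n, IsProbabilityMeasure (μ n)] {ι : Y → ℕ → R} (hι : MeasurableEmbedding ι)
    (hm : m.map ι = Measure.infinitePi μ) {w : ℕ → R} {T : Y → Y}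
    (hιT : Function.Semiconj ι T (weightedShift w)) {A : Set Y} (hA : MeasurableSet A)
    (hTA : T ⁻¹' A = A) : m A = 0 ∨ m A = 1 := by
  have hpre : ∀ k, ι ⁻¹' ((weightedShift w)^[k] ⁻¹' (ι '' A)) = A := fun k => by
    rw [← preimage_comp, ← (hιT.iterate_right k).comp_eq, preimage_comp,
      hι.injective.preimage_image, preimage_iterate_eq, Function.iterate_fixed hTA]
  have hlimsup : ι ⁻¹' limsup (fun k => (weightedShift w)^[k] ⁻¹' (ι '' A)) atTop = A := by
    simp only [limsup_eq_iInf_iSup_of_nat, iInf_eq_iInter, iSup_eq_iUnion, preimage_iInter,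
      preimage_iUnion, hpre]
    exact (limsup_eq_iInf_iSup_of_nat (u := fun _ => A)).symm.trans (limsup_const A)
  rw [← hlimsup, ← hι.map_apply, hm]
  exact infinitePi_limsup_preimage_weightedShift_iterate_eq_zero_or_one w μ
    (hι.measurableSet_image' hA)

namespace lp

variable {p : ℝ≥0∞} [Fact (1 ≤ p)]

theorem isOpenPosMeasure_of_map_coe_eq_infinitePi {F : Type*} [NormedAddCommGroup F]
    [MeasurableSpace F] [BorelSpace F] [SecondCountableTopology F]
    [MeasurableSpace (lp (fun _ : ℕ => F) p)] [BorelSpace (lp (fun _ : ℕ => F) p)] (hp : p ≠ ⊤)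
    {m : Measure (lp (fun _ : ℕ => F) p)} {μ : ℕ → Measure F} [∀ n, IsProbabilityMeasure (μ n)]
    [∀ n, (μ n).IsOpenPosMeasure]
    (hm : m.map (fun f : lp (fun _ : ℕ => F) p => (f : ℕ → F)) = Measure.infinitePi μ) :
    m.IsOpenPosMeasure := by
  have hp0 : 0 < p.toReal := ENNReal.toReal_pos (zero_lt_one.trans_le Fact.out).ne' hp
  set ι := fun f : lp (fun _ : ℕ => F) p => (f : ℕ → F)
  have hι : Measurable ι := lp.uniformContinuous_coe.continuous.measurable
  refine ⟨fun U hU ⟨x, hx⟩ => ?_⟩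
  obtain ⟨ε, hε, hball⟩ := EMetric.isOpen_iff.mp hU x hx
  set η := ε ^ p.toReal / 2
  have hη : η ≠ 0 := (ENNReal.div_pos (ENNReal.rpow_pos_of_nonneg hε hp0.le).ne'
    ENNReal.ofNat_ne_top).ne'
  have hd : ∀ n, Measurable fun c : F => edist c (x n) ^ p.toReal := fun n => by fun_prop
  let head N : Set (ℕ → F) := {t | ∑ n ∈ Finset.range N, edist (t n) (x n) ^ p.toReal < η}
  let tail N : Set (ℕ → F) := {t | ∑' n, edist (t (n + N)) (x (n + N)) ^ p.toReal < η}
  let σ (J : Set ℕ) : MeasurableSpace (ℕ → F) :=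
    ⨆ i ∈ J, MeasurableSpace.comap (fun t : ℕ → F => t i) inferInstance
  have hσ : ∀ J, σ J ≤ MeasurableSpace.pi := fun J =>
    iSup₂_le fun i _ => (measurable_pi_apply i).comap_le
  have htail : ∀ N, MeasurableSet[σ (Ici N)] (tail N) := fun N =>
    measurable_comp_iSup (fun n => by simp : ∀ n, n + N ∈ Ici N) <|
      measurableSet_lt (Measurable.tsum fun n => (hd _).comp (measurable_pi_apply n))
        measurable_const
  have hhead : ∀ N, MeasurableSet[σ (Iio N)] (head N) := fun N =>
    measurableSet_lt (Finset.measurable_sum _ fun n hn =>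
      (hd n).comp (measurable_eval_iSup (by simpa using hn))) measurable_const
  have hν : ∀ s, MeasurableSet s → m (ι ⁻¹' s) = Measure.infinitePi μ s := fun s hs => by
    rw [← Measure.map_apply hι hs, hm]
  have hcover : ⋃ N, ι ⁻¹' tail N = univ :=
    iUnion_eq_univ_iff.mpr fun y => exists_tsum_edist_nat_add_lt hp0 x y hη
  obtain ⟨N, hN⟩ := exists_measure_pos_of_not_measure_iUnion_null (μ := m) <| by
    rw [hcover, ← preimage_univ (f := ι), hν _ .univ]
    simp
  rw [hν _ (hσ _ _ (htail N))] at hN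
  have hhead_pos : 0 < Measure.infinitePi μ (head N) := by
    refine (isOpen_lt (by fun_prop) continuous_const).measure_pos _ ⟨x, ?_⟩
    simpa [head, ENNReal.zero_rpow_of_pos hp0] using pos_iff_ne_zero.mpr hη
  have hsub : ι ⁻¹' (head N ∩ tail N) ⊆ U := fun y ⟨hy₁, hy₂⟩ =>
    hball (edist_lt_of_sum_lt_of_tsum_nat_add_lt hp0 (ENNReal.add_halves _).le hy₁ hy₂)
  refine ((measure_mono hsub).trans_lt' ?_).ne'
  rw [hν _ ((hσ _ _ (hhead N)).inter (hσ _ _ (htail N))),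
    Measure.infinitePi_inter_eq_mul_of_disjoint μ (Iio_disjoint_Ici le_rfl) (hhead N) (htail N)]
  exact ENNReal.mul_pos hhead_pos.ne' hN.ne'

end lp

theorem invariant_product_measure_ergodic_fullSupport_general
    {𝕂 : Type*} [RCLike 𝕂] [MeasurableSpace 𝕂] [BorelSpace 𝕂]
    (p : ℝ≥0∞) [Fact (1 ≤ p)] (hp : p ≠ ⊤)
    (w : ℕ → 𝕂) (hw0 : ∀ n, 1 ≤ n → w n ≠ 0)
    (B : lp (fun _ : ℕ => 𝕂) p →L[𝕂] lp (fun _ : ℕ => 𝕂) p)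
    (hB : ∀ (x : lp (fun _ : ℕ => 𝕂) p) (n : ℕ),
        (B x : ∀ _ : ℕ, 𝕂) n = w (n + 1) * (x : ∀ _ : ℕ, 𝕂) (n + 1))
    (m : Measure (lp (fun _ : ℕ => 𝕂) p))
    (μn : ℕ → Measure 𝕂) (hμn : ∀ n, IsProbabilityMeasure (μn n))
    (hprod : ∀ (N : ℕ) (A : ℕ → Set 𝕂), (∀ n, MeasurableSet (A n)) →
        m {x : lp (fun _ : ℕ => 𝕂) p | ∀ n ≤ N, (x : ∀ _ : ℕ, 𝕂) n ∈ A n} =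
          ∏ n ∈ Finset.range (N + 1), μn n (A n))
    (hinv : ∀ A : Set (lp (fun _ : ℕ => 𝕂) p), MeasurableSet A → m (B ⁻¹' A) = m A)
    (hfull : ∀ U : Set 𝕂, IsOpen U → U.Nonempty → 0 < μn 0 U) :
    (∀ U : Set (lp (fun _ : ℕ => 𝕂) p), IsOpen U → U.Nonempty → 0 < m U) ∧
    (∀ A : Set (lp (fun _ : ℕ => 𝕂) p), MeasurableSet A → B ⁻¹' A = A →
      m A = 0 ∨ m A = 1) := by
  have hι := lp.measurableEmbedding_coe (E := fun _ : ℕ => 𝕂) hp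
  have hm := Measure.map_eq_infinitePi_of_cylinder hι.measurable hprod
  have hιB : Function.Semiconj (fun x : lp (fun _ : ℕ => 𝕂) p => (x : ℕ → 𝕂)) B
      (weightedShift w) := fun x => funext (hB x)
  have hBm : m.map B = m := Measure.ext fun A hA => by
    rw [Measure.map_apply B.continuous.measurable hA, hinv A hA]
  have : (μn 0).IsOpenPosMeasure := ⟨fun U hU hne => (hfull U hU hne).ne'⟩
  have := Measure.isOpenPosMeasure_of_eq_map_mul (fun n => hw0 (n + 1) n.succ_pos)
    (eq_map_mul_of_map_eq_infinitePi hι.measurable hm B.continuous.measurable hBm hιB)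
  have := lp.isOpenPosMeasure_of_map_coe_eq_infinitePi hp hm
  exact ⟨fun U hU hne => hU.measure_pos m hne,
    fun A hA hBA => measure_eq_zero_or_one_of_preimage_eq hι hm hιB hA hBA⟩

/-- If `∑ 1/|w₁⋯w_n|^p < ∞` and `m = ⊗ μ_n` is a `B_w`-invariant product
probability measure on `ℓ_p` whose first marginal `μ₀` has full support in `𝕂`, then `m` has
full support and is ergodic for `B_w`. -/
theorem invariant_product_measure_ergodic_fullSupport
    {𝕂 : Type*} [RCLike 𝕂] [MeasurableSpace 𝕂] [BorelSpace 𝕂]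
    (p : ℝ≥0∞) [Fact (1 ≤ p)] (hp : p ≠ ⊤)
    (w : ℕ → 𝕂) (hw0 : ∀ n, 1 ≤ n → w n ≠ 0) (hwbdd : ∃ M : ℝ, ∀ n, ‖w n‖ ≤ M)
    (hsum : Summable (fun n : ℕ =>
        (1 : ℝ) / ‖∏ i ∈ Finset.Icc 1 (n + 1), w i‖ ^ p.toReal))
    (B : lp (fun _ : ℕ => 𝕂) p →L[𝕂] lp (fun _ : ℕ => 𝕂) p)
    (hB : ∀ (x : lp (fun _ : ℕ => 𝕂) p) (n : ℕ),
        (B x : ∀ _ : ℕ, 𝕂) n = w (n + 1) * (x : ∀ _ : ℕ, 𝕂) (n + 1))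
    (m : Measure (lp (fun _ : ℕ => 𝕂) p)) [IsProbabilityMeasure m]
    (μn : ℕ → Measure 𝕂) (hμn : ∀ n, IsProbabilityMeasure (μn n))
    (hprod : ∀ (N : ℕ) (A : ℕ → Set 𝕂), (∀ n, MeasurableSet (A n)) →
        m {x : lp (fun _ : ℕ => 𝕂) p | ∀ n ≤ N, (x : ∀ _ : ℕ, 𝕂) n ∈ A n} =
          ∏ n ∈ Finset.range (N + 1), μn n (A n))
    (hinv : ∀ A : Set (lp (fun _ : ℕ => 𝕂) p), MeasurableSet A → m (B ⁻¹' A) = m A)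
    (hfull : ∀ U : Set 𝕂, IsOpen U → U.Nonempty → 0 < μn 0 U) :
    (∀ U : Set (lp (fun _ : ℕ => 𝕂) p), IsOpen U → U.Nonempty → 0 < m U) ∧
    (∀ A : Set (lp (fun _ : ℕ => 𝕂) p), MeasurableSet A → B ⁻¹' A = A →
      m A = 0 ∨ m A = 1) :=
  invariant_product_measure_ergodic_fullSupport_general p hp w hw0 B hB m μn hμn hprod hinv hfull
end

section
/- Let h ∈ L₂(ℝ) be real-valued and non-zero. Then there exist constants c > 0 and δ > 0 such that for every α ∈ ℝ with |α| ≤ δ, one has ‖h‖₂² − ∫_ℝ h(x)h(x+α) dx ≥ c·α². -/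
/-!
Write `τ_α f = f(· + α)`. Since `τ_α` is a linear isometry of `L²`,
`‖f - τ_α f‖² = 2 (‖f‖² - ⟪f, τ_α f⟫)`, so it suffices to bound `‖f - τ_α f‖` below linearly
in `|α|`. Because `α ↦ τ_α` is an isometric action, `‖f - τ_{nα} f‖ ≤ n ‖f - τ_α f‖`. On the
other hand `⟪f, τ_β f⟫ → 0` as `|β| → ∞` (this is clear for compactly supported `f`, and these
are dense), so `‖f - τ_β f‖ ≥ ‖f‖` once `|β| ≥ A`. Taking `n` with `n |α| ∈ [A, 2A]` gives
`‖f - τ_α f‖ ≥ ‖f‖ |α| / (2A)`.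
-/

open MeasureTheory Filter Topology Bornology
open scoped InnerProductSpace

theorem mul_abs_le_two_mul_mul_of_nat_mul_le {d : ℝ → ℝ} {m A : ℝ} (hA : 0 < A)
    (hd : ∀ α, 0 ≤ d α) (hmul : ∀ (n : ℕ) α, d (n * α) ≤ n * d α)
    (hfar : ∀ β, A ≤ |β| → m ≤ d β) {α : ℝ} (hα : |α| ≤ A) :
    m * |α| ≤ 2 * A * d α := by
  rcases (abs_nonneg α).eq_or_lt with hα0 | hα0
  · rw [← hα0, mul_zero]
    exact mul_nonneg (by positivity) (hd α)
  -- `n |α|` is the first multiple of `|α|` that reaches `A`, so it is at most `A + |α| ≤ 2A`.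
  set n : ℕ := ⌈A / |α|⌉₊
  have hn_ge : A ≤ n * |α| := (div_le_iff₀ hα0).1 (Nat.le_ceil _)
  have hn_le : n * |α| ≤ 2 * A := by
    have := mul_lt_mul_of_pos_right (Nat.ceil_lt_add_one (div_pos hA hα0).le) hα0
    rw [add_mul, div_mul_cancel₀ _ hα0.ne', one_mul] at this
    linarith
  calc m * |α| ≤ n * d α * |α| := by
        gcongr
        exact (hfar (n * α) (by rwa [abs_mul, Nat.abs_cast])).trans (hmul n α)
    _ = n * |α| * d α := by ring
    _ ≤ 2 * A * d α := by gcongr; exact hd α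

theorem HasCompactSupport.eventually_cobounded_forall_eq_zero_or
    {G E : Type*} [SeminormedAddCommGroup G] [Zero E] {g : G → E} (hg : HasCompactSupport g) :
    ∀ᶠ a in cobounded G, ∀ x, g x = 0 ∨ g (x + a) = 0 := by
  obtain ⟨R, hR⟩ := hg.isBounded.subset_closedBall 0
  refine hasBasis_cobounded_norm.eventually_iff.2 ⟨2 * R + 1, trivial, fun a ha x => ?_⟩
  by_contra! hx
  have hx₁ := mem_closedBall_zero_iff.1 (hR (subset_tsupport g hx.1))
  have hx₂ := mem_closedBall_zero_iff.1 (hR (subset_tsupport g hx.2))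
  have : ‖a‖ ≤ ‖x + a‖ + ‖x‖ := by simpa using norm_sub_le (x + a) x
  linarith [ha.out]

namespace MeasureTheory

namespace Lp

variable {G E : Type*} [MeasurableSpace G] [AddGroup G] [MeasurableAdd G] {μ : Measure G}
  [μ.IsAddRightInvariant] [NormedAddCommGroup E] {p : ENNReal}

noncomputable def shift (a : G) : Lp E p μ →+ Lp E p μ :=
  compMeasurePreserving (· + a) (measurePreserving_add_right μ a)

@[simp]
theorem norm_shift (a : G) (f : Lp E p μ) : ‖shift a f‖ = ‖f‖ :=
  norm_compMeasurePreserving f _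

@[simp]
theorem shift_zero (f : Lp E p μ) : shift (0 : G) f = f := by
  simp only [shift, add_zero]
  exact compMeasurePreserving_id_apply f

theorem shift_add (a b : G) (f : Lp E p μ) : shift (a + b) f = shift a (shift b f) := by
  rw [shift, shift, shift, ← compMeasurePreserving_comp_apply]
  congr 2 with x
  exact (add_assoc x a b).symm

theorem norm_sub_shift_nsmul_le [Fact (1 ≤ p)] (f : Lp E p μ) (a : G) (n : ℕ) :
    ‖f - shift (n • a) f‖ ≤ n * ‖f - shift a f‖ := by
  induction n with
  | zero => simp
  | succ n ih =>
    calc ‖f - shift ((n + 1) • a) f‖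
        ≤ ‖f - shift (n • a) f‖ + ‖shift (n • a) f - shift (n • a) (shift a f)‖ := by
          rw [succ_nsmul, shift_add]; exact norm_sub_le_norm_sub_add_norm_sub _ _ _
      _ ≤ n * ‖f - shift a f‖ + ‖f - shift a f‖ := by
          rw [← map_sub, norm_shift]; gcongr
      _ = (n + 1 : ℕ) * ‖f - shift a f‖ := by push_cast; ring

theorem norm_sub_shift_sq [InnerProductSpace ℝ E] (f : Lp E 2 μ) (a : G) :
    ‖f - shift a f‖ ^ 2 = 2 * (‖f‖ ^ 2 - ⟪f, shift a f⟫_ℝ) := by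
  rw [norm_sub_sq_real, norm_shift]
  ring

end Lp

theorem MemLp.inner_toLp_shift {G E : Type*} [MeasurableSpace G] [AddGroup G] [MeasurableAdd G]
    {μ : Measure G} [μ.IsAddRightInvariant] [NormedAddCommGroup E] [InnerProductSpace ℝ E]
    {h : G → E} (hh : MemLp h 2 μ) (a : G) :
    ⟪hh.toLp h, Lp.shift a (hh.toLp h)⟫_ℝ = ∫ x, ⟪h x, h (x + a)⟫_ℝ ∂μ := by
  rw [Lp.shift, Lp.toLp_compMeasurePreserving, L2.inner_def]
  refine integral_congr_ae ?_
  filter_upwards [hh.coeFn_toLp,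
    (hh.comp_measurePreserving (measurePreserving_add_right μ a)).coeFn_toLp] with x h₁ h₂
  rw [h₁, h₂]
  rfl

variable {G E : Type*} [NormedAddCommGroup G] [MeasurableSpace G] [BorelSpace G]
  {μ : Measure G} [μ.IsAddRightInvariant] [NormedAddCommGroup E] [InnerProductSpace ℝ E]

theorem _root_.HasCompactSupport.eventually_inner_toLp_shift_eq_zero {g : G → E}
    (hg : HasCompactSupport g) (hg₂ : MemLp g 2 μ) :
    ∀ᶠ a in cobounded G, ⟪hg₂.toLp g, Lp.shift a (hg₂.toLp g)⟫_ℝ = 0 := by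
  filter_upwards [hg.eventually_cobounded_forall_eq_zero_or] with a ha
  rw [hg₂.inner_toLp_shift, ← integral_zero G ℝ]
  congr 1 with x
  rcases ha x with h | h <;> simp [h]

theorem Lp.tendsto_inner_shift_cobounded [ProperSpace G] [μ.Regular] (f : Lp E 2 μ) :
    Tendsto (fun a => ⟪f, shift a f⟫_ℝ) (cobounded G) (𝓝 0) := by
  rw [Metric.tendsto_nhds]
  intro ε hε
  obtain ⟨η, hηε, hη⟩ : ∃ η : ℝ, η * (2 * ‖f‖ + η) < ε ∧ 0 < η := by
    have : Tendsto (fun η : ℝ => η * (2 * ‖f‖ + η)) (𝓝 0) (𝓝 0) :=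
      (by fun_prop : Continuous fun η : ℝ => η * (2 * ‖f‖ + η)).tendsto' 0 0 (by simp)
    exact (((this.eventually (gt_mem_nhds hε)).filter_mono nhdsWithin_le_nhds).and
      self_mem_nhdsWithin).exists (f := 𝓝[>] (0 : ℝ))
  obtain ⟨g, hg, hfg, -, hg₂⟩ := (Lp.memLp f).exists_hasCompactSupport_eLpNorm_sub_le
    ENNReal.ofNat_ne_top (ENNReal.ofReal_pos.2 hη).ne'
  set f' := hg₂.toLp g
  have hclose : ‖f - f'‖ ≤ η := by
    rw [← Lp.toLp_coeFn f (Lp.memLp f), ← MemLp.toLp_sub, Lp.norm_toLp]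
    exact ENNReal.toReal_le_of_le_ofReal hη.le hfg
  filter_upwards [hg.eventually_inner_toLp_shift_eq_zero hg₂] with a ha
  have hsplit : ⟪f, shift a f⟫_ℝ
      = ⟪f - f', shift a f⟫_ℝ + ⟪f', shift a (f - f')⟫_ℝ + ⟪f', shift a f'⟫_ℝ := by
    rw [map_sub, inner_sub_left, inner_sub_right]
    ring
  rw [Real.dist_0_eq_abs, hsplit, ha, add_zero]
  calc |⟪f - f', shift a f⟫_ℝ + ⟪f', shift a (f - f')⟫_ℝ|
      ≤ ‖f - f'‖ * ‖f‖ + ‖f'‖ * ‖f - f'‖ := by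
        refine (abs_add_le _ _).trans (add_le_add ?_ ?_) <;>
          exact (abs_real_inner_le_norm _ _).trans_eq (by rw [norm_shift])
    _ ≤ η * ‖f‖ + (‖f‖ + η) * η := by
        gcongr
        exact (norm_le_norm_add_norm_sub f f').trans (by gcongr)
    _ < ε := by linarith

theorem Lp.eventually_norm_le_norm_sub_shift [ProperSpace G] [μ.Regular] (f : Lp E 2 μ) :
    ∀ᶠ a in cobounded G, ‖f‖ ≤ ‖f - shift a f‖ := by
  rcases eq_or_ne f 0 with rfl | hf
  · simp
  have hf₂ : 0 < ‖f‖ ^ 2 / 2 := half_pos (pow_pos (norm_pos_iff.2 hf) 2)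
  filter_upwards [(tendsto_inner_shift_cobounded f).eventually (gt_mem_nhds hf₂)] with a ha
  refine (pow_le_pow_iff_left₀ (norm_nonneg _) (norm_nonneg _) two_ne_zero).1 ?_
  rw [norm_sub_shift_sq]
  linarith

end MeasureTheory

/-- For any non-zero real-valued `h ∈ L₂(ℝ)` there are constants `c > 0` and
`δ > 0` such that `‖h‖₂² − ∫ h(x)h(x+α) dx ≥ c·α²` whenever `|α| ≤ δ`. -/
theorem autocorrelation_quadratic_gap
    (h : ℝ → ℝ) (hmem : MemLp h 2 (volume : Measure ℝ))
    (hne : ¬ h =ᵐ[(volume : Measure ℝ)] 0) :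
    ∃ c : ℝ, 0 < c ∧ ∃ δ : ℝ, 0 < δ ∧ ∀ α : ℝ, |α| ≤ δ →
      c * α ^ 2 ≤ (∫ x : ℝ, h x ^ 2) - ∫ x : ℝ, h x * h (x + α) := by
  set f := hmem.toLp h
  have hf : 0 < ‖f‖ := norm_pos_iff.2 fun hf0 =>
    hne ((hmem.toLp_eq_toLp_iff MemLp.zero).1 (hf0.trans (MemLp.toLp_zero _).symm))
  have hcorr (α : ℝ) : ∫ x, h x * h (x + α) = ⟪f, Lp.shift α f⟫_ℝ := by
    simp [hmem.inner_toLp_shift, mul_comm, f]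
  have hsq : ∫ x, h x ^ 2 = ‖f‖ ^ 2 := by
    simpa [sq, ← real_inner_self_eq_norm_sq] using hcorr 0
  obtain ⟨A, -, hA⟩ :=
    hasBasis_cobounded_norm.eventually_iff.1 (Lp.eventually_norm_le_norm_sub_shift f)
  set δ := max A 1
  have hδ : 0 < δ := lt_max_of_lt_right one_pos
  have hlin (α : ℝ) (hα : |α| ≤ δ) : ‖f‖ * |α| ≤ 2 * δ * ‖f - Lp.shift α f‖ :=
    mul_abs_le_two_mul_mul_of_nat_mul_le (d := fun α => ‖f - Lp.shift α f‖) hδ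
      (fun _ => norm_nonneg _) (fun n α => by simpa using Lp.norm_sub_shift_nsmul_le f α n)
      (fun β hβ => hA ((le_max_left _ _).trans hβ)) hα
  refine ⟨‖f‖ ^ 2 / (8 * δ ^ 2), by positivity, δ, hδ, fun α hα => ?_⟩
  calc ‖f‖ ^ 2 / (8 * δ ^ 2) * α ^ 2 = (‖f‖ * |α|) ^ 2 / (8 * δ ^ 2) := by
        rw [mul_pow, sq_abs]; ring
    _ ≤ (2 * δ * ‖f - Lp.shift α f‖) ^ 2 / (8 * δ ^ 2) := by gcongr ?_ ^ 2 / _; exact hlin α hα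
    _ = (∫ x, h x ^ 2) - ∫ x, h x * h (x + α) := by
        rw [mul_pow, Lp.norm_sub_shift_sq, hsq, hcorr]
        field_simp
        ring
end
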